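/- An allocation is in the strong core of a housing market if and only if there is no weakly blocking cycle: no sequence of distinct agents i_1,...,i_k such that every agent i_l weakly prefers object i_{l+1} to her allotment x_{i_l} and at least one agent strictly prefers it. -/
import Mathlib


/-- `R i a b` means agent `i` weakly prefers object `a` to object `b`. -/
def TotalPref {n : ℕ} (R : Fin n → Fin n → Fin n → Prop) : Prop :=
  ∀ i a b, R i a b ∨ R i b a

def TransPref {n : ℕ} (R : Fin n → Fin n → Fin n → Prop) : Prop :=
  ∀ i a b c, R i a b → R i b c → R i a c

/-- Strict preference of agent `i`: `a` strictly preferred to `b`. -/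
def SPref {n : ℕ} (R : Fin n → Fin n → Fin n → Prop) (i a b : Fin n) : Prop :=
  R i a b ∧ ¬ R i b a

/-- Indifference of agent `i` between `a` and `b`. -/
def Indiff {n : ℕ} (R : Fin n → Fin n → Fin n → Prop) (i a b : Fin n) : Prop :=
  R i a b ∧ R i b a

/-- Preferences are strict: no ties between two distinct acceptable objects. -/
def StrictPrefs {n : ℕ} (R : Fin n → Fin n → Fin n → Prop) : Prop :=
  ∀ i a b, a ≠ b → R i a i → R i b i → ¬ (R i a b ∧ R i b a)

/-- Some coalition `S` blocks allocation `x` via an allocation `z` with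
`{z i : i ∈ S} = S` and `z i` strictly preferred to `x i` for all `i ∈ S`. -/
def Blocks {n : ℕ} (R : Fin n → Fin n → Fin n → Prop) (x : Fin n → Fin n) : Prop :=
  ∃ S : Set (Fin n), S.Nonempty ∧ ∃ z : Fin n → Fin n, Function.Bijective z ∧
    z '' S = S ∧ ∀ i ∈ S, SPref R i (z i) (x i)

/-- `x` is a core allocation. -/
def InCore {n : ℕ} (R : Fin n → Fin n → Fin n → Prop) (x : Fin n → Fin n) : Prop :=
  Function.Bijective x ∧ ¬ Blocks R x

/-- Some coalition weakly blocks allocation `x`. -/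
def WeaklyBlocks {n : ℕ} (R : Fin n → Fin n → Fin n → Prop) (x : Fin n → Fin n) : Prop :=
  ∃ S : Set (Fin n), S.Nonempty ∧ ∃ z : Fin n → Fin n, Function.Bijective z ∧
    z '' S = S ∧ (∀ i ∈ S, R i (z i) (x i)) ∧ ∃ j ∈ S, SPref R j (z j) (x j)

/-- `x` is a strong core allocation. -/
def InStrongCore {n : ℕ} (R : Fin n → Fin n → Fin n → Prop) (x : Fin n → Fin n) : Prop :=
  Function.Bijective x ∧ ¬ WeaklyBlocks R x

/-- `x` is a competitive allocation: part of a competitive equilibrium `(x, p)`. -/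
def IsCompetitive {n : ℕ} (R : Fin n → Fin n → Fin n → Prop) (x : Fin n → Fin n) : Prop :=
  Function.Bijective x ∧ ∃ p : Fin n → ℝ,
    (∀ i, p (x i) ≤ p i) ∧ ∀ i j, SPref R i j (x i) → p i < p j

/-- Some coalition antisymmetrically weakly blocks `x`. -/
def AWBlocks {n : ℕ} (R : Fin n → Fin n → Fin n → Prop) (x : Fin n → Fin n) : Prop :=
  ∃ S : Set (Fin n), S.Nonempty ∧ ∃ z : Fin n → Fin n, Function.Bijective z ∧
    z '' S = S ∧ (∀ i ∈ S, R i (z i) (x i)) ∧ (∃ j ∈ S, SPref R j (z j) (x j)) ∧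
    ∀ i ∈ S, Indiff R i (z i) (x i) → z i = x i

/-- `x` is in the Wako-core (core defined by antisymmetric weak domination). -/
def InWakoCore {n : ℕ} (R : Fin n → Fin n → Fin n → Prop) (x : Fin n → Fin n) : Prop :=
  Function.Bijective x ∧ ¬ AWBlocks R x

/-- `R'` is an improvement for agent `i` with respect to `R`:
(1) agent `i`'s preferences are unchanged; (2) for each `j ≠ i`, object `i`
only moves weakly up among `j`'s acceptable objects; (3) the relative ranking of
acceptable objects different from `i` is unchanged. -/
def Improvement {n : ℕ} (R R' : Fin n → Fin n → Fin n → Prop) (i : Fin n) : Prop :=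
  (∀ a b, R' i a b ↔ R i a b) ∧
  (∀ j, j ≠ i → ∀ k, R j k j →
    (Indiff R j i k → R' j i k) ∧ (SPref R j i k → SPref R' j i k)) ∧
  (∀ j, j ≠ i → ∀ k l, k ≠ i → l ≠ i → R j k j → R j l j → (R j k l ↔ R' j k l))

/-- A weakly blocking cycle for `x`: distinct agents `i₀, …, i_k`, each weakly
preferring `i_{l+1}`'s endowment to her allotment, some strictly. -/
def WeaklyBlockingCycle {n : ℕ} (R : Fin n → Fin n → Fin n → Prop) (x : Fin n → Fin n) : Prop :=
  ∃ (k : ℕ) (f : Fin (k + 1) → Fin n), Function.Injective f ∧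
    (∀ l, R (f l) (f (l + 1)) (x (f l))) ∧
    ∃ l, SPref R (f l) (f (l + 1)) (x (f l))

/-- An allocation is in the strong core iff there is no weakly blocking cycle. -/
theorem strongCore_iff_no_weakly_blocking_cycle {n : ℕ} (R : Fin n → Fin n → Fin n → Prop)
    (hT : TotalPref R) (htr : TransPref R) (x : Fin n → Fin n)
    (hb : Function.Bijective x) :
    InStrongCore R x ↔ ¬ WeaklyBlockingCycle R x := by

  constructor
  · rintro ⟨-, hnb⟩ ⟨k, f, hf, hR, l₀, hS⟩
    apply hnb
    classical
    refine ⟨Set.range f, ⟨f 0, Set.mem_range_self 0⟩, ?_⟩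
    set z : Fin n → Fin n := fun i => if h : ∃ l, f l = i then f (Classical.choose h + 1) else i
      with hzdef
    have hzf : ∀ l, z (f l) = f (l + 1) := by
      intro l
      have h : ∃ m, f m = f l := ⟨l, rfl⟩
      simp only [hzdef, dif_pos h]
      congr 1
      exact congrArg (· + 1) (hf (Classical.choose_spec h))
    have hzout : ∀ i, (¬ ∃ l, f l = i) → z i = i := fun i h => dif_neg h
    have hinj : Function.Injective z := by
      intro a b hab
      by_cases ha : ∃ l, f l = a
      · obtain ⟨la, rfl⟩ := ha
        by_cases hbm : ∃ l, f l = b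
        · obtain ⟨lb, rfl⟩ := hbm
          rw [hzf, hzf] at hab
          have h1 : la + 1 = lb + 1 := hf hab
          have : la = lb := add_right_cancel h1
          rw [this]
        · rw [hzf la, hzout b hbm] at hab
          exact absurd ⟨la + 1, hab⟩ hbm
      · by_cases hbm : ∃ l, f l = b
        · obtain ⟨lb, rfl⟩ := hbm
          rw [hzout a ha, hzf] at hab
          exact absurd ⟨lb + 1, hab.symm⟩ ha
        · rw [hzout a ha, hzout b hbm] at hab; exact hab
    refine ⟨z, Finite.injective_iff_bijective.mp hinj, ?_, ?_, ?_⟩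
    · ext y
      constructor
      · rintro ⟨i, ⟨l, rfl⟩, rfl⟩; exact ⟨l + 1, (hzf l).symm⟩
      · rintro ⟨l, rfl⟩
        refine ⟨f (l - 1), ⟨l - 1, rfl⟩, ?_⟩
        rw [hzf]; congr 1; exact sub_add_cancel l 1
    · rintro i ⟨l, rfl⟩; rw [hzf]; exact hR l
    · exact ⟨f l₀, ⟨l₀, rfl⟩, by rw [hzf]; exact hS⟩
  · intro hnc
    refine ⟨hb, ?_⟩
    rintro ⟨S, hSne, z, hzb, hzS, hRw, j, hjS, hjsp⟩
    apply hnc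
    have hzmem : ∀ i ∈ S, z i ∈ S := fun i hi => hzS ▸ Set.mem_image_of_mem z hi
    have hper : ∀ t, z^[t] j ∈ S := by
      intro t; induction t with
      | zero => exact hjS
      | succ t ih => rw [Function.iterate_succ_apply']; exact hzmem _ ih
    have hjper : j ∈ Function.periodicPts z := by
      set σ := Equiv.ofBijective z hzb with hσdef
      refine ⟨orderOf σ, orderOf_pos σ, ?_⟩
      have hiter : (⇑σ)^[orderOf σ] = ⇑(σ ^ orderOf σ) := rfl
      show z^[orderOf σ] j = j
      have hcz : ⇑σ = z := rfl
      rw [← hcz, hiter, pow_orderOf_eq_one]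
      rfl
    set m := Function.minimalPeriod z j with hmdef
    have hm : 0 < m := Function.minimalPeriod_pos_of_mem_periodicPts hjper
    have hmm : m - 1 + 1 = m := Nat.succ_pred_eq_of_pos hm
    have hstep : ∀ l : Fin (m - 1 + 1), z^[((l + 1 : Fin (m-1+1)) : ℕ)] j = z (z^[(l:ℕ)] j) := by
      intro l
      have hval : ((l + 1 : Fin (m-1+1)) : ℕ) = ((l : ℕ) + 1) % (m - 1 + 1) := by
        simp [Fin.add_def]
      rcases lt_or_eq_of_le (Nat.succ_le_of_lt l.isLt) with hlt | heq
      · rw [hval, Nat.mod_eq_of_lt hlt, Function.iterate_succ_apply']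
      · rw [hval, show (l:ℕ) + 1 = m - 1 + 1 from heq, Nat.mod_self]
        show j = z (z^[(l:ℕ)] j)
        have h1 : z^[(l:ℕ) + 1] j = j := by
          rw [show (l:ℕ) + 1 = m - 1 + 1 from heq, hmm, Function.iterate_minimalPeriod]
        rw [← Function.iterate_succ_apply' z (l:ℕ) j]
        exact h1.symm
    refine ⟨m - 1, fun l => z^[(l:ℕ)] j, ?_, ?_, ⟨0, ?_⟩⟩
    · intro a b hab
      have ha : (a : ℕ) < m := by have := a.isLt; omega
      have hb' : (b : ℕ) < m := by have := b.isLt; omega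
      exact Fin.ext (Function.iterate_injOn_Iio_minimalPeriod ha hb' hab)
    · intro l
      show R (z^[(l:ℕ)] j) (z^[((l + 1 : Fin (m-1+1)) : ℕ)] j) (x (z^[(l:ℕ)] j))
      rw [hstep l]
      exact hRw _ (hper l.val)
    · show SPref R (z^[((0 : Fin (m-1+1)):ℕ)] j)
        (z^[(((0:Fin (m-1+1)) + 1 : Fin (m-1+1)) : ℕ)] j) (x (z^[((0 : Fin (m-1+1)):ℕ)] j))
      rw [hstep 0]
      simp only [Fin.val_zero, Function.iterate_zero_apply]
      exact hjsp
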